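/- Let (X, d, x₀) be a pointed extended pseudometric space and d_p its p-strengthening, d_p(x, x') = min(d(x, x'), ‖(d(x, x₀), d(x₀, x'))‖_p). Then W_p[d_p, x₀] = W_p[d, x₀] on D(X, x₀). -/

import Mathlib

/-!
Since `d_p ≤ d`, one inequality is monotonicity of `W_p` in the ground metric. Conversely, take
representatives padded to a common length `r` and a bijection `σ` between them. Pad both once
more by `r` copies of `x₀`, which does not change the diagrams. Wherever `d_p(x_k, y_{σ k})` is
attained by the route through `x₀`, match `x_k` with a padding copy of `x₀` and a padding copy
of `x₀` with `y_{σ k}`: these two pairs cost exactly `‖(d(x_k, x₀), d(x₀, y_{σ k}))‖_p` in the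
ℓ^p total. Elsewhere keep the direct pair, whose padding partners cost `d(x₀, x₀) = 0`.
-/

open scoped ENNReal BigOperators
noncomputable section

/-- An extended pseudometric. -/
structure IsEPMetric {X : Type*} (d : X → X → ℝ≥0∞) : Prop where
  refl : ∀ x, d x x = 0
  symm : ∀ x y, d x y = d y x
  triangle : ∀ x y z, d x z ≤ d x y + d y z

/-- The ℓ^p norm of a finite tuple of extended nonnegative reals. -/
def lpNorm (p : ℝ≥0∞) {n : ℕ} (v : Fin n → ℝ≥0∞) : ℝ≥0∞ :=
  if p = ∞ then ⨆ i, v i else (∑ i, v i ^ p.toReal) ^ (1 / p.toReal)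

variable {X : Type*}

/-- The congruence on the free commutative monoid (multisets) identifying
formal sums that differ by copies of the basepoint. -/
def diagCon (x₀ : X) : AddCon (Multiset X) where
  r s t := ∃ a b : ℕ, s + Multiset.replicate a x₀ = t + Multiset.replicate b x₀
  iseqv := by
    constructor
    · exact fun s => ⟨0, 0, rfl⟩
    · rintro s t ⟨a, b, h⟩; exact ⟨b, a, h.symm⟩
    · rintro s t u ⟨a, b, h₁⟩ ⟨a', b', h₂⟩
      refine ⟨a + a', b' + b, ?_⟩
      have h3 : s + Multiset.replicate a x₀ + Multiset.replicate a' x₀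
          = u + Multiset.replicate b' x₀ + Multiset.replicate b x₀ := by
        rw [h₁, add_right_comm, h₂, add_right_comm]
      simpa [Multiset.replicate_add, add_assoc] using h3
  add' := by
    rintro s t s' t' ⟨a, b, h₁⟩ ⟨a', b', h₂⟩
    refine ⟨a + a', b + b', ?_⟩
    have h3 : (s + Multiset.replicate a x₀) + (s' + Multiset.replicate a' x₀)
        = (t + Multiset.replicate b x₀) + (t' + Multiset.replicate b' x₀) := by rw [h₁, h₂]
    calc s + s' + Multiset.replicate (a + a') x₀
        = (s + Multiset.replicate a x₀) + (s' + Multiset.replicate a' x₀) := by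
          rw [Multiset.replicate_add]; exact add_add_add_comm s s' _ _
      _ = (t + Multiset.replicate b x₀) + (t' + Multiset.replicate b' x₀) := h3
      _ = t + t' + Multiset.replicate (b + b') x₀ := by
          rw [Multiset.replicate_add]; exact (add_add_add_comm t t' _ _).symm

/-- The monoid of persistence diagrams on a pointed set. -/
abbrev Diagram (X : Type*) (x₀ : X) := (diagCon x₀).Quotient

/-- The canonical map `X → D(X,x₀)`. -/
def diagι (x₀ : X) (x : X) : Diagram X x₀ := (diagCon x₀).mk' {x}

/-- Pad a tuple to length `r` with copies of the basepoint. -/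
def padTo (x₀ : X) {n : ℕ} (x : Fin n → X) (r : ℕ) : Fin r → X :=
  fun k => if h : (k : ℕ) < n then x ⟨k, h⟩ else x₀

/-- The minimal ℓ^p matching cost between two tuples of equal length. -/
def matchCost (d : X → X → ℝ≥0∞) (p : ℝ≥0∞) {r : ℕ} (x y : Fin r → X) : ℝ≥0∞ :=
  ⨅ σ : Equiv.Perm (Fin r), lpNorm p (fun k => d (x k) (y (σ k)))

/-- A tuple enumerating a multiset. -/
def mFun (s : Multiset X) : Fin s.toList.length → X := fun k => s.toList.get k

/-- The p-Wasserstein cost between two multisets, padding both to the combined length. -/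
def WpM (d : X → X → ℝ≥0∞) (x₀ : X) (p : ℝ≥0∞) (s t : Multiset X) : ℝ≥0∞ :=
  matchCost d p (padTo x₀ (mFun s) (Multiset.card s + Multiset.card t))
                (padTo x₀ (mFun t) (Multiset.card s + Multiset.card t))

/-- The p-Wasserstein distance on the monoid of persistence diagrams. -/
def Wp (d : X → X → ℝ≥0∞) (x₀ : X) (p : ℝ≥0∞) (α β : Diagram X x₀) : ℝ≥0∞ :=
  ⨅ (s : Multiset X) (t : Multiset X) (_ : (diagCon x₀).mk' s = α)
    (_ : (diagCon x₀).mk' t = β), WpM d x₀ p s t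

/-- The Lipschitz norm of a map between extended pseudometric spaces. -/
def eLipNorm {Y : Type*} (d : X → X → ℝ≥0∞) (ρ : Y → Y → ℝ≥0∞) (f : X → Y) : ℝ≥0∞ :=
  sInf {C : ℝ≥0∞ | ∀ x y, ρ (f x) (f y) ≤ C * d x y}

namespace Equiv

def sumSwapIf {α : Type*} (P : α → Prop) [DecidablePred P] : Perm (α ⊕ α) :=
  Function.Involutive.toPerm
    (Sum.elim (fun a => if P a then .inr a else .inl a) (fun a => if P a then .inl a else .inr a))
    (by rintro (a | a) <;> by_cases h : P a <;> simp [h])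

@[simp]
lemma sumSwapIf_inl {α : Type*} (P : α → Prop) [DecidablePred P] (a : α) :
    sumSwapIf P (.inl a) = if P a then .inr a else .inl a := rfl

@[simp]
lemma sumSwapIf_inr {α : Type*} (P : α → Prop) [DecidablePred P] (a : α) :
    sumSwapIf P (.inr a) = if P a then .inl a else .inr a := rfl

end Equiv

section LpNorm

variable {p : ℝ≥0∞} {n : ℕ}

lemma lpNorm_of_eq_top (hp : p = ∞) (v : Fin n → ℝ≥0∞) : lpNorm p v = ⨆ i, v i :=
  if_pos hp

lemma lpNorm_of_ne_top (hp : p ≠ ∞) (v : Fin n → ℝ≥0∞) :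
    lpNorm p v = (∑ i, v i ^ p.toReal) ^ (1 / p.toReal) :=
  if_neg hp

lemma lpNorm_mono {v w : Fin n → ℝ≥0∞} (h : ∀ k, v k ≤ w k) : lpNorm p v ≤ lpNorm p w := by
  by_cases hp : p = ∞
  · simp only [lpNorm_of_eq_top hp]
    exact iSup_mono h
  · simp only [lpNorm_of_ne_top hp]
    gcongr with k
    exact h k

lemma lpNorm_comp_perm (v : Fin n → ℝ≥0∞) (ρ : Equiv.Perm (Fin n)) :
    lpNorm p (v ∘ ρ) = lpNorm p v := by
  by_cases hp : p = ∞
  · simp only [lpNorm_of_eq_top hp]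
    exact ρ.surjective.iSup_comp v
  · simp only [lpNorm_of_ne_top hp]
    rw [Function.comp_def, Equiv.sum_comp ρ fun i => v i ^ p.toReal]

lemma le_lpNorm (hp₀ : p ≠ 0) (v : Fin n → ℝ≥0∞) (i : Fin n) : v i ≤ lpNorm p v := by
  by_cases hp : p = ∞
  · rw [lpNorm_of_eq_top hp]
    exact le_iSup v i
  · have hq : 0 < p.toReal := ENNReal.toReal_pos hp₀ hp
    rw [lpNorm_of_ne_top hp]
    calc v i = (v i ^ p.toReal) ^ (1 / p.toReal) := by
          rw [← ENNReal.rpow_mul, mul_one_div_cancel hq.ne', ENNReal.rpow_one]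
      _ ≤ (∑ k, v k ^ p.toReal) ^ (1 / p.toReal) := by
          gcongr
          exact Finset.single_le_sum (f := fun k => v k ^ p.toReal) (fun _ _ => zero_le)
            (Finset.mem_univ i)

lemma lpNorm_pair_rpow (hp₀ : p ≠ 0) (hp : p ≠ ∞) (a b : ℝ≥0∞) :
    lpNorm p ![a, b] ^ p.toReal = a ^ p.toReal + b ^ p.toReal := by
  have hq : 0 < p.toReal := ENNReal.toReal_pos hp₀ hp
  rw [lpNorm_of_ne_top hp, ← ENNReal.rpow_mul, one_div_mul_cancel hq.ne', ENNReal.rpow_one,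
    Fin.sum_univ_two]
  rfl

lemma lpNorm_pair_zero (hp₀ : p ≠ 0) (a : ℝ≥0∞) : lpNorm p ![a, 0] = a := by
  by_cases hp : p = ∞
  · rw [lpNorm_of_eq_top hp]
    exact le_antisymm (iSup_le (Fin.forall_fin_two.2 ⟨le_rfl, zero_le⟩))
      (le_iSup (fun i => ![a, 0] i) 0)
  · have hq : 0 < p.toReal := ENNReal.toReal_pos hp₀ hp
    apply ENNReal.rpow_left_injective hq.ne'
    simp only [lpNorm_pair_rpow hp₀ hp, ENNReal.zero_rpow_of_pos hq, add_zero]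

lemma lpNorm_append_le (hp₀ : p ≠ 0) {a b c : Fin n → ℝ≥0∞}
    (h : ∀ k, lpNorm p ![a k, b k] ≤ c k) : lpNorm p (Fin.append a b) ≤ lpNorm p c := by
  by_cases hp : p = ∞
  · simp only [lpNorm_of_eq_top hp]
    refine iSup_le fun i => Fin.addCases (fun k => ?_) (fun k => ?_) i
    · rw [Fin.append_left]
      exact (le_lpNorm hp₀ ![a k, b k] 0).trans ((h k).trans (le_iSup c k))
    · rw [Fin.append_right]
      exact (le_lpNorm hp₀ ![a k, b k] 1).trans ((h k).trans (le_iSup c k))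
  · simp only [lpNorm_of_ne_top hp]
    gcongr
    rw [Fin.sum_univ_add]
    simp only [Fin.append_left, Fin.append_right, ← Finset.sum_add_distrib]
    gcongr with k
    rw [← lpNorm_pair_rpow hp₀ hp]
    gcongr
    exact h k

end LpNorm

section Matching

variable {d d' : X → X → ℝ≥0∞} {p : ℝ≥0∞}

lemma matchCost_mono (h : ∀ x y, d x y ≤ d' x y) {r : ℕ} (x y : Fin r → X) :
    matchCost d p x y ≤ matchCost d' p x y :=
  iInf_mono fun _ => lpNorm_mono fun _ => h _ _

lemma matchCost_comp_perm_le {n : ℕ} (u v : Fin n → X) (ρ₁ ρ₂ : Equiv.Perm (Fin n)) :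
    matchCost d p (u ∘ ρ₁) (v ∘ ρ₂) ≤ matchCost d p u v :=
  le_iInf fun τ => iInf_le_of_le (ρ₁.trans (τ.trans ρ₂.symm)) <| le_of_eq <| by
    rw [← lpNorm_comp_perm (fun k => d (u k) (v (τ k))) ρ₁]
    simp [Function.comp_def]

lemma matchCost_comp_perm {n : ℕ} (u v : Fin n → X) (ρ₁ ρ₂ : Equiv.Perm (Fin n)) :
    matchCost d p (u ∘ ρ₁) (v ∘ ρ₂) = matchCost d p u v := by
  refine le_antisymm (matchCost_comp_perm_le u v ρ₁ ρ₂) ?_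
  simpa [Function.comp_assoc] using matchCost_comp_perm_le (d := d) (p := p) (u ∘ ρ₁) (v ∘ ρ₂)
    ρ₁.symm ρ₂.symm

lemma exists_perm_comp_eq_of_coe_ofFn_eq {n : ℕ} {u v : Fin n → X}
    (h : (List.ofFn u : Multiset X) = List.ofFn v) : ∃ ρ : Equiv.Perm (Fin n), v ∘ ρ = u := by
  classical
  refine ⟨Equiv.ofFiberEquiv fun x => Fintype.equivOfCardEq ?_, funext (Equiv.ofFiberEquiv_map _)⟩
  have hcount := congr_arg (Multiset.count x) h
  rw [← Fin.univ_val_map, ← Fin.univ_val_map, Multiset.count_map, Multiset.count_map] at hcount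
  simpa [Fintype.card_subtype, eq_comm, Finset.card_def, Finset.filter_val] using hcount

lemma matchCost_congr_of_coe_ofFn_eq {m n : ℕ} {u v : Fin m → X} {u' v' : Fin n → X}
    (hu : (List.ofFn u : Multiset X) = List.ofFn u')
    (hv : (List.ofFn v : Multiset X) = List.ofFn v') :
    matchCost d p u v = matchCost d p u' v' := by
  obtain rfl : m = n := by simpa using congr_arg Multiset.card hu
  obtain ⟨ρ₁, rfl⟩ := exists_perm_comp_eq_of_coe_ofFn_eq hu
  obtain ⟨ρ₂, rfl⟩ := exists_perm_comp_eq_of_coe_ofFn_eq hv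
  exact matchCost_comp_perm u' v' ρ₁ ρ₂

end Matching

lemma coe_ofFn_mFun (s : Multiset X) : (List.ofFn (mFun s) : Multiset X) = s := by
  unfold mFun
  rw [List.ofFn_get, Multiset.coe_toList]

lemma coe_ofFn_padTo (x₀ : X) {n m : ℕ} (u : Fin n → X) (h : n ≤ m) :
    (List.ofFn (padTo x₀ u m) : Multiset X) = List.ofFn u + Multiset.replicate (m - n) x₀ := by
  obtain ⟨k, rfl⟩ := Nat.exists_eq_add_of_le h
  have hpad : padTo x₀ u (n + k) = Fin.append u fun _ : Fin k => x₀ := by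
    funext i
    refine Fin.addCases (fun i => ?_) (fun i => ?_) i <;> simp [padTo]
  rw [hpad, List.ofFn_fin_append, List.ofFn_const, Nat.add_sub_cancel_left, ← Multiset.coe_add,
    Multiset.coe_replicate]

lemma diagCon_mk'_add_replicate (x₀ : X) (s : Multiset X) (k : ℕ) :
    (diagCon x₀).mk' (s + Multiset.replicate k x₀) = (diagCon x₀).mk' s :=
  (diagCon x₀).eq.mpr ⟨0, k, by simp⟩

lemma diagCon_mk'_ofFn_padTo (x₀ : X) (s : Multiset X) {m : ℕ} (h : Multiset.card s ≤ m) :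
    (diagCon x₀).mk' (List.ofFn (padTo x₀ (mFun s) m)) = (diagCon x₀).mk' s := by
  rw [coe_ofFn_padTo x₀ _ (by simpa using h), coe_ofFn_mFun, diagCon_mk'_add_replicate]

lemma Wp_mono {d d' : X → X → ℝ≥0∞} (h : ∀ x y, d x y ≤ d' x y) (x₀ : X) (p : ℝ≥0∞) :
    Wp d x₀ p ≤ Wp d' x₀ p := fun _ _ =>
  iInf₂_mono fun _ _ => iInf₂_mono fun _ _ => matchCost_mono h _ _

lemma Wp_le_matchCost_append (d : X → X → ℝ≥0∞) (x₀ : X) (p : ℝ≥0∞) {n : ℕ} (u v : Fin n → X) :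
    Wp d x₀ p ((diagCon x₀).mk' (List.ofFn u)) ((diagCon x₀).mk' (List.ofFn v))
      ≤ matchCost d p (Fin.append u fun _ : Fin n => x₀) (Fin.append v fun _ : Fin n => x₀) := by
  refine iInf₂_le_of_le _ _ <| iInf₂_le_of_le rfl rfl <| le_of_eq ?_
  apply matchCost_congr_of_coe_ofFn_eq <;>
    rw [coe_ofFn_padTo x₀ _ (by simp), coe_ofFn_mFun, List.ofFn_fin_append, List.ofFn_const,
      ← Multiset.coe_add, Multiset.coe_replicate] <;>
    simp

def pStrengthening (d : X → X → ℝ≥0∞) (x₀ : X) (p : ℝ≥0∞) (x y : X) : ℝ≥0∞ :=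
  min (d x y) (lpNorm p ![d x x₀, d x₀ y])

/-- Where `d_p` prefers the route through `x₀`, match `x k` with a padding copy of `x₀` and the
`k`-th padding copy of `x₀` with `y (σ k)`; elsewhere keep the direct match. -/
lemma matchCost_append_le_lpNorm_pStrengthening {d : X → X → ℝ≥0∞} {x₀ : X} {p : ℝ≥0∞}
    (h₀ : d x₀ x₀ = 0) (hp₀ : p ≠ 0) {r : ℕ} (x y : Fin r → X) (σ : Equiv.Perm (Fin r)) :
    matchCost d p (Fin.append x fun _ : Fin r => x₀) (Fin.append y fun _ : Fin r => x₀)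
      ≤ lpNorm p fun k => pStrengthening d x₀ p (x k) (y (σ k)) := by
  classical
  let viaBase : Fin r → Prop := fun k =>
    lpNorm p ![d (x k) x₀, d x₀ (y (σ k))] < d (x k) (y (σ k))
  let τ : Equiv.Perm (Fin (r + r)) :=
    finSumFinEquiv.permCongr ((Equiv.sumSwapIf viaBase).trans (Equiv.sumCongr σ σ))
  have hcost : (fun i => d (Fin.append x (fun _ => x₀) i) (Fin.append y (fun _ => x₀) (τ i)))
      = Fin.append (fun k => d (x k) (if viaBase k then x₀ else y (σ k)))
          (fun k => d x₀ (if viaBase k then y (σ k) else x₀)) := by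
    funext i
    refine Fin.addCases (fun k => ?_) (fun k => ?_) i <;>
      by_cases hk : viaBase k <;>
      simp only [τ, hk, Equiv.permCongr_apply, Equiv.trans_apply, finSumFinEquiv_symm_apply_castAdd,
        finSumFinEquiv_symm_apply_natAdd, Equiv.sumSwapIf_inl, Equiv.sumSwapIf_inr, if_true,
        if_false, Equiv.sumCongr_apply, Sum.map_inl, Sum.map_inr, finSumFinEquiv_apply_left,
        finSumFinEquiv_apply_right, Fin.append_left, Fin.append_right]
  refine iInf_le_of_le τ ?_
  rw [hcost]
  refine lpNorm_append_le hp₀ fun k => ?_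
  by_cases hk : viaBase k
  · simp only [if_pos hk]
    exact le_min hk.le le_rfl
  · simp only [if_neg hk, h₀, lpNorm_pair_zero hp₀]
    exact le_min le_rfl (not_lt.1 hk)

/-- The p-strengthening of `d` induces the same p-Wasserstein distance:
`W_p[d_p, x₀] = W_p[d, x₀]`. -/
theorem wasserstein_strengthening (d : X → X → ℝ≥0∞) (hd : IsEPMetric d) (x₀ : X)
    (p : ℝ≥0∞) (hp : 1 ≤ p) :
    Wp (fun x y => min (d x y) (lpNorm p ![d x x₀, d x₀ y])) x₀ p = Wp d x₀ p := by
  refine le_antisymm (Wp_mono (fun _ _ => min_le_left _ _) x₀ p) fun α β => ?_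
  refine le_iInf₂ fun s t => le_iInf₂ fun hs ht => le_iInf fun σ => ?_
  have hr : Multiset.card s ≤ Multiset.card s + Multiset.card t := Nat.le_add_right _ _
  have hr' : Multiset.card t ≤ Multiset.card s + Multiset.card t := Nat.le_add_left _ _
  calc Wp d x₀ p α β
      = Wp d x₀ p ((diagCon x₀).mk' (List.ofFn (padTo x₀ (mFun s) _)))
          ((diagCon x₀).mk' (List.ofFn (padTo x₀ (mFun t) _))) := by
        rw [diagCon_mk'_ofFn_padTo x₀ s hr, diagCon_mk'_ofFn_padTo x₀ t hr', hs, ht]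
    _ ≤ _ := Wp_le_matchCost_append d x₀ p _ _
    _ ≤ _ := matchCost_append_le_lpNorm_pStrengthening (hd.refl x₀)
        (zero_lt_one.trans_le hp).ne' _ _ σ

end
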